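/- arXiv:2503.10124 — 2 statements merged into one kernel-verified Lean document; each statement's English description precedes it below -/
import Mathlib

section
/- For k ≥ 1 and m, n, r ≥ 0, the operator identity ⟨XD+r+m⟩_n · X^k = X^k · Σ_{l=0}^{n} C(n,l)·⟨XD+r⟩_l·⟨m+k⟩_{n-l} holds, where X is multiplication by x and D = d/dx. -/
/-
The Weyl relation `D X = X D + 1` gives `(X D) X^k = X^k (X D + k)`, so `X^k` intertwines
`X D + r + m` with `X D + r + m + k`, and hence `⟨X D + r + m⟩ₙ X^k = X^k ⟨X D + r + m + k⟩ₙ`.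
Since scalars are central, the Chu–Vandermonde identity
`⟨A + c⟩ₙ = ∑ₗ C(n,l) ⟨c⟩ₙ₋ₗ ⟨A⟩ₗ` holds for every operator `A`; apply it with
`A = X D + r` and `c = m + k`.
-/

/-- Rising factorial ⟨x⟩ₙ = x(x+1)⋯(x+n-1). -/
noncomputable def risingFac (x : ℝ) (n : ℕ) : ℝ := ∏ i ∈ Finset.range n, (x + i)

/-- Falling factorial (x)ₙ = x(x-1)⋯(x-n+1). -/
noncomputable def fallingFac (x : ℝ) (n : ℕ) : ℝ := ∏ i ∈ Finset.range n, (x - i)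

/-- Lah numbers L(n,k) = (n!/k!)·C(n-1,k-1) for n ≥ k ≥ 1, L(0,0)=1, and 0 for n < k. -/
noncomputable def lah (n k : ℕ) : ℝ :=
  if k ≤ n then (n.factorial : ℝ) / (k.factorial : ℝ) * ((n - 1).choose (k - 1)) else 0

/-- Lah-Bell polynomial LBₙ(x) = Σ_{k=0}^n L(n,k) xᵏ. -/
noncomputable def lahBell (n : ℕ) (x : ℝ) : ℝ := ∑ k ∈ Finset.range (n + 1), lah n k * x ^ k

/-- r-Lah numbers Lʳ(n,k) = (n!/k!)·C(n+r-1, k+r-1) for n ≥ k, and 0 for n < k. -/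
noncomputable def rLah (r n k : ℕ) : ℝ :=
  if k ≤ n then (n.factorial : ℝ) / (k.factorial : ℝ) * ((n + r - 1).choose (k + r - 1)) else 0

/-- r-Lah-Bell polynomial LBₙ⁽ʳ⁾(x) = Σ_{k=0}^n Lʳ(n,k) xᵏ. -/
noncomputable def rLahBell (r n : ℕ) (x : ℝ) : ℝ :=
  ∑ k ∈ Finset.range (n + 1), rLah r n k * x ^ k

open Polynomial in
/-- X: multiplication by the variable, as a linear endomorphism of ℝ[X]. -/
noncomputable def Xop : Module.End ℝ (Polynomial ℝ) := LinearMap.mulLeft ℝ (Polynomial.X)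

/-- D: differentiation, as a linear endomorphism of ℝ[X]. -/
noncomputable def Dop : Module.End ℝ (Polynomial ℝ) := Polynomial.derivative

/-- Operator rising factorial ⟨A⟩ₙ = A(A+1)⋯(A+n-1). -/
noncomputable def endRF (A : Module.End ℝ (Polynomial ℝ)) : ℕ → Module.End ℝ (Polynomial ℝ)
  | 0 => 1
  | n + 1 => endRF A n * (A + (n : ℕ) • 1)

open Polynomial Finset

lemma risingFac_succ (x : ℝ) (n : ℕ) : risingFac x (n + 1) = risingFac x n * (x + n) :=
  prod_range_succ _ n

lemma Dop_mul_Xop : Dop * Xop = Xop * Dop + 1 := by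
  refine LinearMap.ext fun p => ?_
  simp [Xop, Dop, derivative_mul, add_comm]

lemma Xop_mul_Dop_mul_Xop_pow (k : ℕ) : Xop * Dop * Xop ^ k = Xop ^ k * (Xop * Dop + k • 1) := by
  induction k with
  | zero => simp
  | succ k ih =>
    rw [pow_succ, ← mul_assoc, ih, mul_assoc, add_mul, mul_assoc Xop, Dop_mul_Xop]
    simp only [mul_add, mul_one, one_mul, smul_mul_assoc, mul_smul_comm, mul_assoc, succ_nsmul]
    abel

lemma endRF_mul_of_mul_eq {A B T : Module.End ℝ ℝ[X]} (h : A * T = T * B) (n : ℕ) :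
    endRF A n * T = T * endRF B n := by
  induction n with
  | zero => simp [endRF]
  | succ n ih =>
    have h_succ : (A + n • 1) * T = T * (B + n • 1) := by
      rw [add_mul, h, mul_add, smul_one_mul, mul_smul_one]
    rw [endRF, endRF, mul_assoc, h_succ, ← mul_assoc, ih, mul_assoc]

lemma endRF_add_smul_one (A : Module.End ℝ ℝ[X]) (c : ℝ) (n : ℕ) :
    endRF (A + c • 1) n =
      ∑ l ∈ range (n + 1), ((n.choose l : ℝ) * risingFac c (n - l)) • endRF A l := by
  induction n with
  | zero => simp [endRF, risingFac]
  | succ n ih =>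
    have term_mul : ∀ l ∈ range (n + 1), ((n.choose l : ℝ) * risingFac c (n - l)) • endRF A l *
        (A + c • 1 + n • 1) = n.choose l • (risingFac c (n + 1 - l) • endRF A l) +
          n.choose l • (risingFac c (n - l) • endRF A (l + 1)) := by
      intro l hmem
      have hl : l ≤ n := Nat.lt_succ_iff.mp (mem_range.mp hmem)
      have hsplit : A + c • 1 + n • 1 = (A + l • 1) + (c + ↑(n - l)) • (1 : Module.End ℝ ℝ[X]) := by
        rw [Nat.cast_sub hl, ← Nat.cast_smul_eq_nsmul ℝ, ← Nat.cast_smul_eq_nsmul ℝ]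
        module
      have hE : endRF A l * (A + l • 1) = endRF A (l + 1) := rfl
      rw [smul_mul_assoc, hsplit, mul_add, mul_smul_one, hE, Nat.sub_add_comm hl, risingFac_succ]
      module
    -- Pascal's rule `C(n+1, l) = C(n, l) + C(n, l-1)` merges the two resulting sums.
    rw [endRF, ih, sum_mul, sum_congr rfl term_mul, sum_add_distrib,
      ← sum_choose_succ_nsmul (fun l j => risingFac c j • endRF A l)]
    refine sum_congr rfl fun l _ => ?_
    rw [mul_smul, Nat.cast_smul_eq_nsmul]

theorem opRF_mul_Xpow_general (n m r k : ℕ) :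
    endRF (Xop * Dop + (r + m) • 1) n * Xop ^ k =
      Xop ^ k * ∑ l ∈ Finset.range (n + 1),
        ((n.choose l : ℝ) * risingFac ((m : ℝ) + k) (n - l)) •
          endRF (Xop * Dop + r • 1) l := by
  have hshift : (Xop * Dop + (r + m) • 1) * Xop ^ k =
      Xop ^ k * (Xop * Dop + r • 1 + ((m : ℝ) + k) • 1) := by
    rw [add_mul, Xop_mul_Dop_mul_Xop_pow, smul_one_mul]
    simp only [mul_add, mul_smul_one, ← Nat.cast_smul_eq_nsmul ℝ, Nat.cast_add]
    module
  rw [endRF_mul_of_mul_eq hshift, endRF_add_smul_one]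

/-- For k ≥ 1: ⟨XD+r+m⟩ₙ Xᵏ = Xᵏ Σ_{l=0}^n C(n,l) ⟨XD+r⟩ₗ ⟨m+k⟩_{n-l}. -/
theorem opRF_mul_Xpow (n m r k : ℕ) (hk : 1 ≤ k) :
    endRF (Xop * Dop + (r + m) • 1) n * Xop ^ k =
      Xop ^ k * ∑ l ∈ Finset.range (n + 1),
        ((n.choose l : ℝ) * risingFac ((m : ℝ) + k) (n - l)) •
          endRF (Xop * Dop + r • 1) l :=
  opRF_mul_Xpow_general n m r k
end

section
/- For nonzero real λ and nonnegative integers n, k, r with n ≥ k, the λ-analogue of the r-Lah number, defined by ⟨x+r⟩_{n,λ} = Σ_{k=0}^{n} L_λ^r(n,k)·(x)_{k,λ}, satisfies L_λ^r(n,k) = (n!/k!)·C_λ(r+λ(n-1), n-k), where C_λ(x, j) = (x)_{j,λ}/j! is the degenerate binomial coefficient. -/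
/-- Degenerate rising factorial ⟨x⟩_{n,λ} = x(x+λ)⋯(x+(n-1)λ). -/
noncomputable def degRising (l x : ℝ) (n : ℕ) : ℝ := ∏ i ∈ Finset.range n, (x + i * l)

/-- Degenerate falling factorial (x)_{n,λ} = x(x-λ)⋯(x-(n-1)λ). -/
noncomputable def degFalling (l x : ℝ) (n : ℕ) : ℝ := ∏ i ∈ Finset.range n, (x - i * l)

/-- Degenerate binomial coefficient C_λ(x,k) = (x)_{k,λ}/k!. -/
noncomputable def degChoose (l x : ℝ) (k : ℕ) : ℝ := degFalling l x k / (k.factorial : ℝ)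

/-!
Reversing the order of the factors gives `⟨x + r⟩_{n,λ} = (x + r + λ(n-1))_{n,λ}`, and the
degenerate Chu–Vandermonde identity `(x + y)_{n,λ} = ∑ C(n,k) (x)_{k,λ} (y)_{n-k,λ}` with
`y = r + λ(n-1)` exhibits the claimed coefficients. They are the only ones: evaluating at
`x = kλ` kills `(x)_{j,λ}` exactly for `j > k`, so the coefficients are determined one by one.
-/

open Finset

section DegenerateFactorial

variable (l : ℝ)

theorem degFalling_succ (x : ℝ) (n : ℕ) :
    degFalling l x (n + 1) = degFalling l x n * (x - n * l) :=
  prod_range_succ _ n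

theorem degFalling_add (x y : ℝ) (n : ℕ) :
    degFalling l (x + y) n = ∑ ij ∈ antidiagonal n,
      (n.choose ij.1 : ℝ) * (degFalling l x ij.1 * degFalling l y ij.2) := by
  induction n with
  | zero => simp [degFalling]
  | succ n ih =>
    rw [sum_antidiagonal_choose_succ_mul fun i j => degFalling l x i * degFalling l y j,
      ← sum_add_distrib, degFalling_succ, ih, sum_mul]
    refine sum_congr rfl fun ij hij => ?_
    rw [HasAntidiagonal.mem_antidiagonal] at hij
    rw [Nat.choose_symm_of_eq_add hij.symm, degFalling_succ, degFalling_succ, ← hij]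
    push_cast
    ring

theorem degRising_eq_degFalling (x : ℝ) (n : ℕ) :
    degRising l x n = degFalling l (x + l * ((n : ℝ) - 1)) n := by
  rw [degFalling, ← prod_range_reflect]
  refine prod_congr rfl fun i hi => ?_
  have hin := mem_range.1 hi
  rw [Nat.cast_sub (by omega), Nat.cast_sub (by omega)]
  push_cast
  ring

theorem degRising_add_eq_sum_degFalling (x r : ℝ) (n : ℕ) :
    degRising l (x + r) n = ∑ k ∈ range (n + 1),
      (n.factorial : ℝ) / (k.factorial : ℝ) * degChoose l (r + l * ((n : ℝ) - 1)) (n - k) *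
        degFalling l x k := by
  rw [degRising_eq_degFalling, add_assoc, degFalling_add,
    Nat.sum_antidiagonal_eq_sum_range_succ_mk]
  refine sum_congr rfl fun k hk => ?_
  rw [Nat.cast_choose ℝ (Nat.lt_succ_iff.1 (mem_range.1 hk)), degChoose]
  field_simp

theorem degFalling_natCast_mul_eq_zero {m j : ℕ} (h : m < j) : degFalling l (m * l) j = 0 :=
  prod_eq_zero (mem_range.2 h) (sub_self _)

variable {l}

theorem degFalling_natCast_mul_ne_zero (hl : l ≠ 0) {m j : ℕ} (h : j ≤ m) :
    degFalling l (m * l) j ≠ 0 := by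
  refine prod_ne_zero_iff.2 fun i hi => ?_
  rw [← sub_mul]
  exact mul_ne_zero (sub_ne_zero.2 (by exact_mod_cast ((mem_range.1 hi).trans_le h).ne')) hl

theorem eq_zero_of_sum_mul_degFalling_eq_zero (hl : l ≠ 0) {n : ℕ} {c : ℕ → ℝ}
    (h : ∀ x, ∑ j ∈ range (n + 1), c j * degFalling l x j = 0) {k : ℕ} (hk : k ≤ n) :
    c k = 0 := by
  induction k using Nat.strong_induction_on with
  | _ k ih =>
    have hsum := h (k * l)
    rw [sum_eq_single k] at hsum
    · exact (mul_eq_zero.1 hsum).resolve_right (degFalling_natCast_mul_ne_zero hl le_rfl)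
    · intro j _ hjk
      rcases hjk.lt_or_gt with hjk | hjk
      · rw [ih j hjk (hjk.le.trans hk), zero_mul]
      · rw [degFalling_natCast_mul_eq_zero l hjk, mul_zero]
    · exact fun hk' => absurd (mem_range.2 (Nat.lt_succ_of_le hk)) hk'

end DegenerateFactorial

/-- If L_λʳ(n,·) are the connection coefficients in ⟨x+r⟩_{n,λ} = Σ_{k=0}^n L_λʳ(n,k)(x)_{k,λ},
then for n ≥ k we have L_λʳ(n,k) = (n!/k!)·C_λ(r+λ(n-1), n-k). -/
theorem degRLah_explicit (l : ℝ) (hl : l ≠ 0) (L : ℕ → ℕ → ℝ) (r n k : ℕ) (hkn : k ≤ n)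
    (hL : ∀ (m : ℕ) (x : ℝ),
      degRising l (x + r) m = ∑ j ∈ Finset.range (m + 1), L m j * degFalling l x j) :
    L n k = (n.factorial : ℝ) / (k.factorial : ℝ) *
      degChoose l ((r : ℝ) + l * ((n : ℝ) - 1)) (n - k) := by
  set C : ℕ → ℝ := fun j =>
    n.factorial / j.factorial * degChoose l (r + l * ((n : ℝ) - 1)) (n - j)
  have hdiff : ∀ x, ∑ j ∈ range (n + 1), (L n j - C j) * degFalling l x j = 0 := by
    intro x
    simp only [sub_mul, sum_sub_distrib]
    rw [← hL, degRising_add_eq_sum_degFalling]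
    exact sub_self _
  exact sub_eq_zero.1 (eq_zero_of_sum_mul_degFalling_eq_zero hl hdiff hkn)
end
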